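/- arXiv:2409.07296 — 3 statements merged into one kernel-verified Lean document; each statement's English description precedes it below -/
import Mathlib

section
/- Suppose 0 < r < 1, L2(x) > 0, L2(y) ≤ r·L2(x), θ ∈ (0,1), and the descent test Φ(y,θ) > Φ(x,θ) − (1/2)(1−r)²·L2(x) fails. Then the denominator D = L1(y) − L1(x) + L2(x) − L2(y) is strictly positive. -/
theorem stmt_4 (r θ L1x L1y L2x L2y : ℝ)
    (hr0 : 0 < r) (hr1 : r < 1) (hL2x : 0 < L2x) (hL2y : 0 ≤ L2y)
    (hrest : L2y ≤ r * L2x) (hθ0 : 0 < θ) (hθ1 : θ < 1)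
    (hfail : θ * L1y + (1 - θ) * L2y >
        θ * L1x + (1 - θ) * L2x - (1 / 2) * (1 - r) ^ 2 * L2x) :
    0 < L1y - L1x + L2x - L2y := by
  nlinarith [mul_pos hθ0 hL2x, sq_nonneg (1-r), mul_nonneg (le_of_lt hθ0) (sub_nonneg.2 hrest), mul_pos (sub_pos.2 hr1) hL2x]
end

section
/- If at every iteration θ_{k+1} ∈ (0,1] and the acceptance condition Φ(x^{k+1}, θ_{k+1}) ≤ Φ(x^k, θ_{k+1}) − (1/2)(1−r)²·L2(x^k) holds, with (θ_k) nonincreasing, L1 bounded below by 0, and L2 ≥ 0, then the series ∑_k L2(x^k) converges, and in particular L2(x^k) → 0. -/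
open Filter

theorem stmt_7 (r : ℝ) (hr0 : 0 < r) (hr1 : r < 1)
    (a b θ : ℕ → ℝ) (ha : ∀ k, 0 ≤ a k) (hb : ∀ k, 0 ≤ b k)
    (hθpos : ∀ k, 0 < θ k) (hθle1 : ∀ k, θ k ≤ 1) (hθmono : Antitone θ)
    (θstar : ℝ) (hθstar : 0 < θstar)
    (hevconst : ∃ N, ∀ k ≥ N, θ k = θstar)
    (haccept : ∀ k, θ (k + 1) * a (k + 1) + (1 - θ (k + 1)) * b (k + 1) ≤
        θ (k + 1) * a k + (1 - θ (k + 1)) * b k - (1 / 2) * (1 - r) ^ 2 * b k) :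
    Summable b ∧ Tendsto b atTop (nhds 0) := by
  obtain ⟨N, hN⟩ := hevconst
  set c : ℝ := (1 / 2) * (1 - r) ^ 2 with hc
  have hcpos : 0 < c := by nlinarith [pow_pos (show (0:ℝ) < 1 - r by linarith) 2]
  have hθs1 : θstar ≤ 1 := by rw [← hN N le_rfl]; exact hθle1 N
  set F : ℕ → ℝ := fun k => θstar * a k + (1 - θstar) * b k with hF
  have hFnonneg : ∀ k, 0 ≤ F k := fun k => by
    have := ha k; have := hb k; simp only [hF]; nlinarith
  have hstep : ∀ k ≥ N, F (k + 1) + c * b k ≤ F k := by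
    intro k hk
    have h := haccept k
    rw [hN (k + 1) (le_trans hk (Nat.le_succ k))] at h
    simp only [hF]; linarith
  have key : ∀ n, c * ∑ i ∈ Finset.range n, b (i + N) ≤ F N - F (N + n) := by
    intro n
    induction n with
    | zero => simp
    | succ n ih =>
      rw [Finset.sum_range_succ, mul_add]
      have := hstep (N + n) (Nat.le_add_right N n)
      have hnn : n + N = N + n := Nat.add_comm n N
      rw [hnn]
      have : F (N + n + 1) + c * b (N + n) ≤ F (N + n) := this
      have hadd : N + (n + 1) = N + n + 1 := rfl
      rw [hadd]
      linarith
  have hsum : Summable (fun k => b (k + N)) := by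
    apply summable_of_sum_range_le (c := F N / c) (fun n => hb (n + N))
    intro n
    have h := key n
    have h2 : c * ∑ i ∈ Finset.range n, b (i + N) ≤ F N := by
      have := hFnonneg (N + n); linarith
    rw [le_div_iff₀' hcpos]; exact h2
  have hb2 : Summable b := (summable_nat_add_iff N).mp hsum
  exact ⟨hb2, hb2.tendsto_atTop_zero⟩
end

section
/- Let (θ_k) be a nonincreasing sequence in (0,1) converging to θ* > 0, and let nonnegative sequences a_k, b_k satisfy θ_{k+1}·a_{k+1} + (1−θ_{k+1})·b_{k+1} ≤ θ_{k+1}·a_k + (1−θ_{k+1})·b_k − c·b_k for all k with c > 0, and a_k ≤ M for all k. Then b_k → 0. -/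
/-!
With `φ k = θ k / (1 - θ k)`, dividing the recursion by `1 - θ (k+1)` and using that `φ` is
antitone shows that `V k = b k + φ k * a k` is a nonnegative sequence with
`V (k+1) + c * b k ≤ V k`. Telescoping bounds the partial sums of `b` by `V 0 / c`, so `b` is
summable and hence tends to `0`.
-/

open Filter

theorem summable_of_add_mul_le_of_nonneg {V b : ℕ → ℝ} {c : ℝ} (hc : 0 < c)
    (hV : ∀ n, 0 ≤ V n) (hb : ∀ n, 0 ≤ b n) (hdecr : ∀ n, V (n + 1) + c * b n ≤ V n) :
    Summable b := by
  refine summable_of_sum_range_le (c := V 0 / c) hb fun n => ?_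
  rw [le_div_iff₀ hc, mul_comm, Finset.mul_sum]
  calc ∑ k ∈ Finset.range n, c * b k ≤ ∑ k ∈ Finset.range n, (V k - V (k + 1)) :=
        Finset.sum_le_sum fun k _ => by linarith [hdecr k]
    _ = V 0 - V n := Finset.sum_range_sub' V n
    _ ≤ V 0 := by linarith [hV n]

theorem div_one_sub_le_div_one_sub {s t : ℝ} (hst : s ≤ t) (ht : t < 1) :
    s / (1 - s) ≤ t / (1 - t) := by
  rw [div_le_div_iff₀ (by linarith) (by linarith)]
  nlinarith

theorem add_div_one_sub_mul_le_of_convex_comb_le {t a a' b b' c : ℝ} (ht0 : 0 ≤ t) (ht1 : t < 1)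
    (hb : 0 ≤ b) (hc : 0 ≤ c)
    (h : t * a' + (1 - t) * b' ≤ t * a + (1 - t) * b - c * b) :
    b' + t / (1 - t) * a' + c * b ≤ b + t / (1 - t) * a := by
  have hpos : 0 < 1 - t := by linarith
  rw [← mul_le_mul_iff_of_pos_left hpos]
  have hcancel : ∀ x, (1 - t) * (t / (1 - t) * x) = t * x := fun x => by
    rw [← mul_assoc, mul_div_cancel₀ _ hpos.ne']
  simp only [mul_add, hcancel]
  nlinarith [mul_nonneg ht0 (mul_nonneg hc hb)]

theorem stmt_14_general (θ : ℕ → ℝ) (hθ0 : ∀ k, 0 < θ k) (hθ1 : ∀ k, θ k < 1)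
    (hθmono : Antitone θ)
    (a b : ℕ → ℝ) (ha : ∀ k, 0 ≤ a k) (hb : ∀ k, 0 ≤ b k)
    (c : ℝ) (hc : 0 < c)
    (hrec : ∀ k, θ (k + 1) * a (k + 1) + (1 - θ (k + 1)) * b (k + 1) ≤
        θ (k + 1) * a k + (1 - θ (k + 1)) * b k - c * b k) :
    Tendsto b atTop (nhds 0) := by
  set φ : ℕ → ℝ := fun k => θ k / (1 - θ k)
  have hφ_nonneg : ∀ k, 0 ≤ φ k := fun k => div_nonneg (hθ0 k).le (sub_nonneg.2 (hθ1 k).le)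
  have hφ_anti : Antitone φ := fun m n hmn => div_one_sub_le_div_one_sub (hθmono hmn) (hθ1 m)
  have hV_nonneg : ∀ k, 0 ≤ b k + φ k * a k := fun k =>
    add_nonneg (hb k) (mul_nonneg (hφ_nonneg k) (ha k))
  refine (summable_of_add_mul_le_of_nonneg hc hV_nonneg hb fun k => ?_).tendsto_atTop_zero
  have hstep := add_div_one_sub_mul_le_of_convex_comb_le (hθ0 (k + 1)).le (hθ1 (k + 1)) (hb k)
    hc.le (hrec k)
  have hφ_step := mul_le_mul_of_nonneg_right (hφ_anti k.le_succ) (ha k)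
  linarith

theorem stmt_14 (θ : ℕ → ℝ) (hθ0 : ∀ k, 0 < θ k) (hθ1 : ∀ k, θ k < 1)
    (hθmono : Antitone θ) (θstar : ℝ) (hθstar : 0 < θstar)
    (hθlim : Tendsto θ atTop (nhds θstar))
    (a b : ℕ → ℝ) (ha : ∀ k, 0 ≤ a k) (hb : ∀ k, 0 ≤ b k)
    (M : ℝ) (haM : ∀ k, a k ≤ M)
    (c : ℝ) (hc : 0 < c)
    (hrec : ∀ k, θ (k + 1) * a (k + 1) + (1 - θ (k + 1)) * b (k + 1) ≤
        θ (k + 1) * a k + (1 - θ (k + 1)) * b k - c * b k) :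
    Tendsto b atTop (nhds 0) :=
  stmt_14_general θ hθ0 hθ1 hθmono a b ha hb c hc hrec
end
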